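/- Let n ≥ 2, let x = (x_1, …, x_n) ∈ ℝ^n with x_1 ≥ x_2 ≥ … ≥ x_n ≥ 0, Σ_{i=1}^n x_i² = 1 and x_1 + x_2 ≥ 1, and let ε_1, …, ε_n be independent random variables with Pr(ε_i = 1) = Pr(ε_i = −1) = 1/2. Set r = Σ_{i=3}^n ε_i x_i. Then Pr(|r| ≤ 1 + x_1 − x_2) > 1/2. -/
import Mathlib


open Classical Finset

/-- The sign `±1` associated to a Boolean: this encodes a Rademacher variable. -/
noncomputable def sgn (b : Bool) : ℝ := if b then 1 else -1

/-- Probability of an event under the uniform measure on the `2^n` sign vectors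
`ε ∈ {-1,1}^n`, encoded as Boolean vectors `σ : Fin n → Bool`. -/
noncomputable def prSign (n : ℕ) (P : (Fin n → Bool) → Prop) : ℝ :=
  ((Finset.univ.filter P).card : ℝ) / 2 ^ n


lemma sgn_not (b : Bool) : sgn (!b) = - sgn b := by cases b <;> simp [sgn]

lemma sgn_mul_self (b : Bool) : sgn b * sgn b = 1 := by cases b <;> simp [sgn]

lemma sum_sgn_cross {n : ℕ} (i j : Fin n) (hij : i ≠ j) :
    ∑ σ : Fin n → Bool, sgn (σ i) * sgn (σ j) = 0 := by
  refine Finset.sum_involution (fun σ _ => Function.update σ i (!σ i)) ?_ ?_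
    (fun σ _ => Finset.mem_univ _) ?_
  · intro σ _
    simp [Function.update_self, Function.update_of_ne (Ne.symm hij), sgn_not]
  · intro σ _ _ h
    have := congrFun h i
    simp at this
  · intro σ _
    funext k
    by_cases hk : k = i
    · subst hk; simp
    · simp [Function.update_of_ne hk]

lemma sum_sq_rad {n : ℕ} (S : Finset (Fin n)) (x : Fin n → ℝ) :
    ∑ σ : Fin n → Bool, (∑ i ∈ S, sgn (σ i) * x i) ^ 2
      = 2 ^ n * ∑ i ∈ S, (x i) ^ 2 := by
  have hcard : (Finset.univ : Finset (Fin n → Bool)).card = 2 ^ n := by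
    simp [Finset.card_univ]
  have hexp : ∀ σ : Fin n → Bool,
      (∑ i ∈ S, sgn (σ i) * x i) ^ 2
        = ∑ i ∈ S, ∑ j ∈ S, (sgn (σ i) * sgn (σ j)) * (x i * x j) := by
    intro σ
    rw [sq, Finset.sum_mul_sum]
    exact Finset.sum_congr rfl fun i _ => Finset.sum_congr rfl fun j _ => by ring
  simp_rw [hexp]
  rw [Finset.sum_comm]
  have hinner : ∀ i ∈ S, ∑ σ : Fin n → Bool, ∑ j ∈ S, (sgn (σ i) * sgn (σ j)) * (x i * x j)
      = 2 ^ n * (x i) ^ 2 := by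
    intro i hi
    rw [Finset.sum_comm]
    have hterm : ∀ j ∈ S, ∑ σ : Fin n → Bool, (sgn (σ i) * sgn (σ j)) * (x i * x j)
        = if j = i then 2 ^ n * (x i) ^ 2 else 0 := by
      intro j _
      by_cases hij : j = i
      · subst hij
        simp only [if_pos rfl]
        rw [← Finset.sum_mul]
        simp_rw [sgn_mul_self]
        rw [Finset.sum_const, hcard]
        push_cast; ring
      · rw [if_neg hij, ← Finset.sum_mul]
        rw [sum_sgn_cross i j (Ne.symm hij)]
        ring
    rw [Finset.sum_congr rfl hterm, Finset.sum_ite_eq' S i (fun _ => 2 ^ n * (x i) ^ 2),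
      if_pos hi]
  rw [Finset.sum_congr rfl hinner, Finset.mul_sum]

theorem stmt2 (n : ℕ) (hn : 2 ≤ n) (x : Fin n → ℝ)
    (hmono : ∀ i j : Fin n, i ≤ j → x j ≤ x i)
    (hnonneg : ∀ i, 0 ≤ x i)
    (hx : ∑ i, (x i) ^ 2 = 1)
    (h12 : x ⟨0, by omega⟩ + x ⟨1, by omega⟩ ≥ 1)
    (r : (Fin n → Bool) → ℝ)
    (hr : ∀ σ, r σ = ∑ i ∈ Finset.univ.filter (fun i : Fin n => 2 ≤ (i : ℕ)),
      sgn (σ i) * x i) :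
    prSign n (fun σ => |r σ| ≤ 1 + x ⟨0, by omega⟩ - x ⟨1, by omega⟩) > 1 / 2 := by
  have hn0 : (0:ℕ) < n := by omega
  have hn1 : (1:ℕ) < n := by omega
  set i0 : Fin n := ⟨0, hn0⟩ with hi0
  set i1 : Fin n := ⟨1, hn1⟩ with hi1
  have h12' : x i0 + x i1 ≥ 1 := h12
  have hmono01 : x i1 ≤ x i0 := hmono i0 i1 (by simp [hi0, hi1, Fin.le_def])
  set t : ℝ := 1 + x i0 - x i1 with ht
  have ht1 : (1:ℝ) ≤ t := by simp [ht]; linarith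
  have ht0 : (0:ℝ) < t := by linarith
  clear_value i0 i1 t
  -- tail sum of squares
  have hpair : Finset.univ.filter (fun i : Fin n => ¬ 2 ≤ (i:ℕ)) = {i0, i1} := by
    ext k
    simp [hi0, hi1, Fin.ext_iff]
    omega
  have hsplit : ∑ i ∈ Finset.univ.filter (fun i : Fin n => 2 ≤ (i:ℕ)), (x i) ^ 2
      = 1 - (x i0) ^ 2 - (x i1) ^ 2 := by
    have h := Finset.sum_filter_add_sum_filter_not Finset.univ
      (fun i : Fin n => 2 ≤ (i:ℕ)) (fun i => (x i) ^ 2)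
    rw [hpair, Finset.sum_pair (by simp [hi0, hi1, Fin.ext_iff]), hx] at h
    linarith
  have hsum : ∑ σ : Fin n → Bool, (r σ) ^ 2 = 2 ^ n * (1 - (x i0) ^ 2 - (x i1) ^ 2) := by
    simp_rw [hr]
    rw [sum_sq_rad, hsplit]
  have hineq : 2 * (1 - (x i0) ^ 2 - (x i1) ^ 2) ≤ t ^ 2 := by
    have h1 : 0 ≤ x i1 := hnonneg i1
    nlinarith [sq_nonneg (x i0 - x i1), sq_nonneg (x i0 + x i1 - 1)]
  -- counting
  set B : Finset (Fin n → Bool) := Finset.univ.filter (fun σ => ¬ |r σ| ≤ t) with hB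
  set G : Finset (Fin n → Bool) := Finset.univ.filter (fun σ => |r σ| ≤ t) with hG
  have hGB : G.card + B.card = 2 ^ n := by
    rw [hG, hB, Finset.card_filter_add_card_filter_not]
    simp [Finset.card_univ]
  have hpow : (0:ℝ) < 2 ^ n := by positivity
  have hGhalf : (2:ℝ) ^ n / 2 < G.card := by
    by_cases hBne : B.Nonempty
    · have h1 : ∑ _σ ∈ B, t ^ 2 < ∑ σ ∈ B, (r σ) ^ 2 := by
        apply Finset.sum_lt_sum_of_nonempty hBne
        intro σ hσ
        rw [hB, Finset.mem_filter] at hσ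
        have habs : t < |r σ| := lt_of_not_ge hσ.2
        calc t ^ 2 < |r σ| ^ 2 := by
              exact pow_lt_pow_left₀ habs ht0.le two_ne_zero
          _ = (r σ) ^ 2 := sq_abs _
      rw [Finset.sum_const, nsmul_eq_mul] at h1
      have h2 : ∑ σ ∈ B, (r σ) ^ 2 ≤ ∑ σ : Fin n → Bool, (r σ) ^ 2 :=
        Finset.sum_le_sum_of_subset_of_nonneg (Finset.subset_univ _)
          (fun σ _ _ => sq_nonneg _)
      have hE2 : 1 - (x i0) ^ 2 - (x i1) ^ 2 ≤ t ^ 2 / 2 := by linarith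
      have h4 : ∑ σ ∈ B, (r σ) ^ 2 ≤ 2 ^ n * (t ^ 2 / 2) := by
        rw [hsum] at h2
        exact h2.trans (mul_le_mul_of_nonneg_left hE2 hpow.le)
      have h5 : (B.card : ℝ) * t ^ 2 < (2 ^ n / 2) * t ^ 2 := by
        have heq : (2:ℝ) ^ n * (t ^ 2 / 2) = (2 ^ n / 2) * t ^ 2 := by ring
        have := h1.trans_le h4
        linarith
      have hBcard : (B.card : ℝ) < 2 ^ n / 2 := lt_of_mul_lt_mul_right h5 (sq_nonneg t)
      have hcast : (G.card : ℝ) + B.card = 2 ^ n := by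
        exact_mod_cast congrArg (fun m : ℕ => (m : ℝ)) hGB
      linarith
    · have hB0 : B.card = 0 := by
        rw [Finset.card_eq_zero]
        exact Finset.not_nonempty_iff_eq_empty.mp hBne
      have hG2 : G.card = 2 ^ n := by omega
      have : (G.card : ℝ) = 2 ^ n := by exact_mod_cast hG2
      linarith
  show (Finset.univ.filter (fun σ => |r σ| ≤ t)).card / (2:ℝ) ^ n > 1 / 2
  rw [gt_iff_lt, div_lt_div_iff₀ (by norm_num) hpow]
  rw [← hG]
  linarith
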